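/- arXiv:2301.04060 — 4 statements merged into one kernel-verified Lean document; each statement's English description precedes it below -/
import Mathlib

section
/- Let P = {x ∈ ℝ^n : A x ≥ b} be a polyhedron. Every vertex of P is the basic point x^I of some feasible basis I, i.e., there exists I ⊆ [m] with #I = n, A_I nonsingular, x^I = A_I^{-1} b_I a point of P, and the vertex equals x^I. -/
open Matrix

/-- The polyhedron `{x : A x ≥ b}`. -/
def PolyhedronOf {m n : ℕ} (A : Matrix (Fin m) (Fin n) ℝ) (b : Fin m → ℝ) :
    Set (Fin n → ℝ) :=
  {x | ∀ i, b i ≤ A.mulVec x i}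

/-- `v` is a vertex of `P`: the singleton `{v}` is the set of minimizers of some
linear functional over `P` (a zero-dimensional face). -/
def IsVertex {n : ℕ} (P : Set (Fin n → ℝ)) (v : Fin n → ℝ) : Prop :=
  ∃ c : Fin n → ℝ, {x ∈ P | ∀ y ∈ P, c ⬝ᵥ x ≤ c ⬝ᵥ y} = {v}

/-!
A vertex `v` admits no nonzero direction `d` with `v ± t • d ∈ P` for small `t`. If `d` is
orthogonal to every row of `A` that is tight at `v`, moving along `d` keeps the tight rows tight
and, for small `|t|`, the slack rows slack; so such a `d` must vanish. Hence the tight rows have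
rank `n`, and any `n` linearly independent tight rows form a feasible basis with basic point `v`.
-/

open Filter Topology

theorem Matrix.exists_submatrix_det_ne_zero_of_mulVec_eq_zero {ι K : Type*} [Finite ι] [Field K]
    {n : ℕ} (M : Matrix ι (Fin n) K) (hM : ∀ d, M *ᵥ d = 0 → d = 0) :
    ∃ r : Fin n ↪ ι, (M.submatrix r id).det ≠ 0 := by
  obtain ⟨κ, a, ha, hspan, hli⟩ := exists_linearIndependent' K M.row
  have : Finite κ := Finite.of_injective a ha
  have : Fintype κ := Fintype.ofFinite κ
  have hcard : Fintype.card κ = n := by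
    rw [← finrank_span_eq_card hli, hspan, ← rank_eq_finrank_span_row, rank,
      LinearMap.finrank_range_of_inj (LinearMap.ker_eq_bot.1 (ker_mulVecLin_eq_bot_iff.2 hM)),
      Module.finrank_fin_fun]
  let e : Fin n ≃ κ := (Fintype.equivFinOfCardEq hcard).symm
  refine ⟨⟨a ∘ e, ha.comp e.injective⟩, ?_⟩
  rw [← isUnit_iff_ne_zero, ← isUnit_iff_isUnit_det, ← linearIndependent_rows_iff_isUnit]
  exact hli.comp e e.injective

namespace IsVertex

variable {n : ℕ} {P : Set (Fin n → ℝ)} {v : Fin n → ℝ}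

theorem mem (hv : IsVertex P v) : v ∈ P := by
  obtain ⟨c, hc⟩ := hv
  exact (hc.symm ▸ rfl : v ∈ {x ∈ P | ∀ y ∈ P, c ⬝ᵥ x ≤ c ⬝ᵥ y}).1

theorem eq_zero_of_add_mem_of_sub_mem (hv : IsVertex P v) {w : Fin n → ℝ}
    (hadd : v + w ∈ P) (hsub : v - w ∈ P) : w = 0 := by
  obtain ⟨c, hc⟩ := hv
  obtain ⟨-, hmin⟩ : v ∈ {x ∈ P | ∀ y ∈ P, c ⬝ᵥ x ≤ c ⬝ᵥ y} := hc.symm ▸ rfl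
  have hcw : c ⬝ᵥ w = 0 := by
    have h₁ := hmin _ hadd
    have h₂ := hmin _ hsub
    rw [dotProduct_add] at h₁
    rw [dotProduct_sub] at h₂
    linarith
  have hmin' : v + w ∈ {x ∈ P | ∀ y ∈ P, c ⬝ᵥ x ≤ c ⬝ᵥ y} :=
    ⟨hadd, fun y hy => by rw [dotProduct_add, hcw, add_zero]; exact hmin y hy⟩
  rw [hc, Set.mem_singleton_iff, add_eq_left] at hmin'
  exact hmin'

theorem eq_zero_of_eventually_add_smul_mem (hv : IsVertex P v) {d : Fin n → ℝ}
    (hd : ∀ᶠ t in 𝓝 (0 : ℝ), v + t • d ∈ P) : d = 0 := by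
  obtain ⟨ε, hε, hball⟩ := Metric.eventually_nhds_iff.1 hd
  have hmem : ∀ t : ℝ, |t| < ε → v + t • d ∈ P := fun t ht => hball (by simpa using ht)
  have hsmul : (ε / 2) • d = 0 := by
    refine hv.eq_zero_of_add_mem_of_sub_mem (hmem _ ?_) ?_
    · rw [abs_of_pos (half_pos hε)]; linarith
    · rw [sub_eq_add_neg, ← neg_smul]
      exact hmem _ (by rw [abs_neg, abs_of_pos (half_pos hε)]; linarith)
  exact (smul_eq_zero.1 hsmul).resolve_left (half_pos hε).ne'

end IsVertex

theorem eventually_add_smul_mem_polyhedronOf {m n : ℕ} {A : Matrix (Fin m) (Fin n) ℝ}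
    {b : Fin m → ℝ} {v d : Fin n → ℝ} (hv : v ∈ PolyhedronOf A b)
    (hd : ∀ i, (A *ᵥ v) i = b i → (A *ᵥ d) i = 0) :
    ∀ᶠ t in 𝓝 (0 : ℝ), v + t • d ∈ PolyhedronOf A b := by
  have hline : ∀ (t : ℝ) i, (A *ᵥ (v + t • d)) i = (A *ᵥ v) i + t * (A *ᵥ d) i := by
    intro t i
    simp only [mulVec_add, mulVec_smul, Pi.add_apply, Pi.smul_apply, smul_eq_mul]
  refine eventually_all.2 fun i => ?_
  simp only [hline]
  rcases (hv i).eq_or_lt with htight | hslack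
  · exact Eventually.of_forall fun t => by rw [hd i htight.symm, mul_zero, add_zero, htight]
  · have hcont : Continuous fun t : ℝ => (A *ᵥ v) i + t * (A *ᵥ d) i := by fun_prop
    exact ((hcont.tendsto 0).eventually_const_lt (by simpa using hslack)).mono fun _ => le_of_lt

/-- Every vertex of `P = {x : A x ≥ b}` is the basic point of some feasible basis:
there are `n` row indices `I` (given by the embedding `r`) with `A_I` nonsingular
and `A_I v = b_I`; since moreover `v ∈ P`, the basis is feasible and the vertex
equals its basic point `x^I = A_I⁻¹ b_I`. -/
theorem stmt4 {m n : ℕ} (A : Matrix (Fin m) (Fin n) ℝ) (b : Fin m → ℝ)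
    (v : Fin n → ℝ) (hv : IsVertex (PolyhedronOf A b) v) :
    ∃ r : Fin n ↪ Fin m,
      (A.submatrix r id).det ≠ 0 ∧
      (A.submatrix r id).mulVec v = (fun i => b (r i)) ∧
      v ∈ PolyhedronOf A b := by
  let T := {i // (A *ᵥ v) i = b i}
  have htight : ∀ d, A.submatrix (Subtype.val : T → Fin m) id *ᵥ d = 0 → d = 0 := fun d hd =>
    hv.eq_zero_of_eventually_add_smul_mem <|
      eventually_add_smul_mem_polyhedronOf hv.mem fun i hi => congrFun hd ⟨i, hi⟩
  obtain ⟨r, hr⟩ :=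
    (A.submatrix (Subtype.val : T → Fin m) id).exists_submatrix_det_ne_zero_of_mulVec_eq_zero
      htight
  exact ⟨r.trans (Function.Embedding.subtype _), hr, funext fun j => (r j).2, hv.mem⟩
end

section
/- Let I and I' be two distinct lex-feasible bases of the symbolically perturbed polyhedron associated with (A, b). Then the corresponding basic matrices X^I = A_I^{-1} b̃_I and X^{I'} = A_{I'}^{-1} b̃_{I'} are distinct. -/
open Matrix

/-- Lexicographic order on row vectors in `ℝ^{1+m}`. -/
def lexLe {m : ℕ} (u v : Fin (m + 1) → ℝ) : Prop :=
  u = v ∨ ∃ k, (∀ j, j < k → u j = v j) ∧ u k < v k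

/-- The perturbed right-hand side `b̃ = [b, -Id_m]`: row `i` encodes `b i - ε^(i+1)`. -/
def btilde {m : ℕ} (b : Fin m → ℝ) : Matrix (Fin m) (Fin (m + 1)) ℝ :=
  fun i j => if j = 0 then b i else if (j : ℕ) = (i : ℕ) + 1 then -1 else 0

/-- `I` (given by the embedding `r : Fin n ↪ Fin m`) is a lex-feasible basis with
basic matrix `X`: `A_I` is nonsingular, `A_I X = b̃_I` (so `X = A_I⁻¹ b̃_I`) and
`A X ≥_lex b̃` row-wise. -/
def IsLexFeasibleBasis {m n : ℕ} (A : Matrix (Fin m) (Fin n) ℝ) (b : Fin m → ℝ)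
    (r : Fin n ↪ Fin m) (X : Matrix (Fin n) (Fin (m + 1)) ℝ) : Prop :=
  (A.submatrix r id).det ≠ 0 ∧
  (A.submatrix r id) * X = (btilde b).submatrix r id ∧
  ∀ i, lexLe ((btilde b) i) ((A * X) i)

/-!
A lex-feasible basis can be read off its basic matrix `X`: the basis consists of the rows
`i` for which column `i + 1` of `X` (the coefficient of `ε^(i+1)`) is nonzero. Indeed, if
`i ∉ I` then column `i + 1` of `b̃_I` vanishes, hence so does that of `X = A_I⁻¹ b̃_I`;
if `i ∈ I` then row `i` of `A X = b̃` has entry `-1` in that column.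
-/

theorem Matrix.col_eq_zero_of_mul_eq {n k R : Type*} [Fintype n] [DecidableEq n] [CommRing R]
    [NoZeroDivisors R] {M : Matrix n n R} (hM : M.det ≠ 0) {X B : Matrix n k R}
    (hMX : M * X = B) {c : k} (hB : ∀ l, B l c = 0) (j : n) : X j c = 0 := by
  have hcol : M *ᵥ (fun j => X j c) = 0 := by
    ext l
    simp only [mulVec, dotProduct, ← mul_apply, hMX, hB, Pi.zero_apply]
  exact congrFun (eq_zero_of_mulVec_eq_zero hM hcol) j

theorem btilde_apply_succ_self {m : ℕ} (b : Fin m → ℝ) (i : Fin m) :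
    btilde b i i.succ = -1 := by
  simp [btilde, Fin.succ_ne_zero]

theorem btilde_apply_succ_of_ne {m : ℕ} (b : Fin m → ℝ) {i l : Fin m} (h : l ≠ i) :
    btilde b l i.succ = 0 := by
  simp [btilde, Fin.succ_ne_zero, Fin.val_ne_of_ne h.symm]

namespace IsLexFeasibleBasis

variable {m n : ℕ} {A : Matrix (Fin m) (Fin n) ℝ} {b : Fin m → ℝ} {r : Fin n ↪ Fin m}
  {X : Matrix (Fin n) (Fin (m + 1)) ℝ}

theorem col_succ_eq_zero (h : IsLexFeasibleBasis A b r X) {i : Fin m}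
    (hi : i ∉ Set.range r) (j : Fin n) : X j i.succ = 0 :=
  col_eq_zero_of_mul_eq h.1 h.2.1 (c := i.succ)
    (fun l => btilde_apply_succ_of_ne b fun hl => hi ⟨l, hl⟩) j

theorem exists_col_succ_ne_zero (h : IsLexFeasibleBasis A b r X) {i : Fin m}
    (hi : i ∈ Set.range r) : ∃ j, X j i.succ ≠ 0 := by
  obtain ⟨k, rfl⟩ := hi
  by_contra! hzero
  have hrow := congrFun (congrFun h.2.1 k) (r k).succ
  simp only [mul_apply, submatrix_apply, id, hzero, mul_zero, Finset.sum_const_zero,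
    btilde_apply_succ_self] at hrow
  norm_num at hrow

theorem mem_range_iff (h : IsLexFeasibleBasis A b r X) (i : Fin m) :
    i ∈ Set.range r ↔ ∃ j, X j i.succ ≠ 0 := by
  refine ⟨h.exists_col_succ_ne_zero, fun ⟨j, hj⟩ => ?_⟩
  by_contra hi
  exact hj (h.col_succ_eq_zero hi j)

end IsLexFeasibleBasis

/-- Two distinct lex-feasible bases have distinct basic matrices. -/
theorem stmt5 {m n : ℕ} (A : Matrix (Fin m) (Fin n) ℝ) (b : Fin m → ℝ)
    (r r' : Fin n ↪ Fin m) (X X' : Matrix (Fin n) (Fin (m + 1)) ℝ)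
    (hI : IsLexFeasibleBasis A b r X) (hI' : IsLexFeasibleBasis A b r' X')
    (hne : Set.range r ≠ Set.range r') :
    X ≠ X' := by
  rintro rfl
  exact hne (Set.ext fun i => (hI.mem_range_iff i).trans (hI'.mem_range_iff i).symm)
end

section
/- For row vectors α = (α_0, …, α_m) and β = (β_0, …, β_m) in ℝ^{1+m}, α ≤_lex β holds if and only if there exists ε_0 > 0 such that for all ε with 0 < ε ≤ ε_0, ∑_{k=0}^m α_k ε^k ≤ ∑_{k=0}^m β_k ε^k. -/
open Filter Topology

theorem lexLe_iff_toLex_le {m : ℕ} (u v : Fin (m + 1) → ℝ) : lexLe u v ↔ toLex u ≤ toLex v := by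
  rw [le_iff_eq_or_lt, toLex_inj]
  rfl

theorem eventually_nhdsGT_iff_exists_forall_le {X : Type*} [TopologicalSpace X] [LinearOrder X]
    [OrderTopology X] [DenselyOrdered X] [NoMaxOrder X] {a : X} {p : X → Prop} :
    (∀ᶠ x in 𝓝[>] a, p x) ↔ ∃ b > a, ∀ x, a < x → x ≤ b → p x := by
  simp only [(nhdsGT_basis_Ioc a).eventually_iff, Set.mem_Ioc, and_imp, gt_iff_lt]

section OrderedField

variable {𝕜 : Type*} [Field 𝕜] [LinearOrder 𝕜] [IsStrictOrderedRing 𝕜] [TopologicalSpace 𝕜]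
  [OrderTopology 𝕜]

theorem eventually_pos_sum_mul_pow {n : ℕ} (γ : Fin n → 𝕜) (k : Fin n)
    (hlow : ∀ j < k, γ j = 0) (hk : 0 < γ k) :
    ∀ᶠ ε in 𝓝[>] (0 : 𝕜), 0 < ∑ j, γ j * ε ^ (j : ℕ) := by
  -- `q ε = (∑ j, γ j * ε ^ j) / ε ^ k`; the truncated exponent `j - k` only matters for `j < k`,
  -- where `γ j = 0`.
  set q : 𝕜 → 𝕜 := fun ε ↦ ∑ j, γ j * ε ^ ((j : ℕ) - k)
  have hq_zero : q 0 = γ k := by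
    refine (Finset.sum_eq_single k (fun j _ hjk ↦ ?_) (by simp)).trans (by simp)
    rcases hjk.lt_or_gt with hlt | hgt
    · simp [hlow j hlt]
    · simp [zero_pow (Nat.sub_ne_zero_of_lt (Fin.lt_def.mp hgt))]
  have hq_pos : ∀ᶠ ε in 𝓝 (0 : 𝕜), 0 < q ε :=
    (continuous_const.tendsto 0).eventually_lt (by fun_prop : Continuous q).continuousAt
      (hq_zero ▸ hk)
  have hfactor : ∀ ε, ∑ j, γ j * ε ^ (j : ℕ) = ε ^ (k : ℕ) * q ε := by
    intro ε
    rw [Finset.mul_sum]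
    refine Finset.sum_congr rfl fun j _ ↦ ?_
    rcases lt_or_ge j k with hlt | hge
    · simp [hlow j hlt]
    · rw [mul_left_comm, ← pow_add, Nat.add_sub_cancel' (Fin.le_def.mp hge)]
  filter_upwards [nhdsWithin_le_nhds hq_pos, self_mem_nhdsWithin] with ε hqε (hε : 0 < ε)
  rw [hfactor]
  positivity

theorem eventually_sum_mul_pow_lt_of_toLex_lt {n : ℕ} {α β : Fin n → 𝕜}
    (h : toLex α < toLex β) :
    ∀ᶠ ε in 𝓝[>] (0 : 𝕜), ∑ j, α j * ε ^ (j : ℕ) < ∑ j, β j * ε ^ (j : ℕ) := by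
  obtain ⟨k, hlow, hk⟩ := h
  filter_upwards [eventually_pos_sum_mul_pow (β - α) k
    (fun j hj ↦ sub_eq_zero.mpr (hlow j hj).symm) (sub_pos.mpr hk)] with ε hε
  simpa [sub_mul] using hε

end OrderedField

/-- `α ≤_lex β` iff the polynomial `∑ α_k ε^k` is at most `∑ β_k ε^k` for all
sufficiently small `ε > 0`. -/
theorem stmt8 {m : ℕ} (α β : Fin (m + 1) → ℝ) :
    lexLe α β ↔
      ∃ ε₀ > (0 : ℝ), ∀ ε : ℝ, 0 < ε → ε ≤ ε₀ →
        ∑ k : Fin (m + 1), α k * ε ^ (k : ℕ) ≤ ∑ k : Fin (m + 1), β k * ε ^ (k : ℕ) := by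
  rw [lexLe_iff_toLex_le, ← eventually_nhdsGT_iff_exists_forall_le]
  constructor
  · intro h
    rcases h.eq_or_lt with h | h
    · simp [toLex_inj.mp h]
    · exact (eventually_sum_mul_pow_lt_of_toLex_lt h).mono fun _ ↦ le_of_lt
  · intro h
    by_contra hlt
    obtain ⟨ε, hle, hgt⟩ := (h.and (eventually_sum_mul_pow_lt_of_toLex_lt (not_le.mp hlt))).exists
    exact hle.not_gt hgt
end

section
/- Let P = {x : A x ≥ b} be a polyhedron and v a vertex of P given as the basic point of the feasible basis I*. Then there exists a vector c ∈ ℝ^n such that v is the unique minimizer of x ↦ ⟨c, x⟩ over P. -/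
/-! Take `c = ∑_{i ∈ I*} a_i`, i.e. `c = 1 ᵥ* B` for the basis matrix `B = A_{I*}`. Then
`⟨c, x⟩ = ∑ (B x)_i`, and on `P` every term is at least `b_i = (B v)_i`. Equality forces
`B x = B v`, hence `x = v` since `B` is nonsingular. -/

open Matrix

theorem Matrix.submatrix_id_mulVec {l m n α : Type*} [Fintype n] [NonUnitalNonAssocSemiring α]
    (A : Matrix m n α) (r : l → m) (x : n → α) :
    A.submatrix r id *ᵥ x = (A *ᵥ x) ∘ r :=
  submatrix_mulVec_equiv A x r (Equiv.refl n)

theorem Matrix.one_vecMul_dotProduct_lt {ι R : Type*} [Fintype ι] [DecidableEq ι] [Field R]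
    [LinearOrder R] [IsStrictOrderedRing R] {B : Matrix ι ι R} (hB : B.det ≠ 0) {v y : ι → R}
    (hle : B *ᵥ v ≤ B *ᵥ y) (hne : y ≠ v) : (1 ᵥ* B) ⬝ᵥ v < (1 ᵥ* B) ⬝ᵥ y := by
  have hinj : Function.Injective (B *ᵥ ·) :=
    mulVec_injective_iff_isUnit.2 ((isUnit_iff_isUnit_det B).2 hB.isUnit)
  rw [← dotProduct_mulVec, ← dotProduct_mulVec, one_dotProduct, one_dotProduct]
  exact Fintype.sum_strictMono (hle.lt_of_ne fun h => hne (hinj h).symm)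

/-- If `v` is the basic point of a feasible basis `I*` (given by the embedding `r`),
then some linear functional `⟨c, ·⟩` is uniquely minimized over `P` at `v`. -/
theorem stmt10 {m n : ℕ} (A : Matrix (Fin m) (Fin n) ℝ) (b : Fin m → ℝ)
    (r : Fin n ↪ Fin m)  -- the feasible basis `I*`
    (hbasis : (A.submatrix r id).det ≠ 0)
    (v : Fin n → ℝ)
    (hv : (A.submatrix r id).mulVec v = fun i => b (r i))  -- `v = x^{I*}`
    (hfeas : v ∈ PolyhedronOf A b) :
    ∃ c : Fin n → ℝ, v ∈ PolyhedronOf A b ∧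
      ∀ y ∈ PolyhedronOf A b, y ≠ v → c ⬝ᵥ v < c ⬝ᵥ y := by
  refine ⟨1 ᵥ* A.submatrix r id, hfeas, fun y hy hne => ?_⟩
  refine one_vecMul_dotProduct_lt hbasis (fun i => ?_) hne
  rw [hv, submatrix_id_mulVec]
  exact hy (r i)
end
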